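/- arXiv:1907.09218 — 8 statements merged into one kernel-verified Lean document; each statement's English description precedes it below -/
import Mathlib

section
/- In the recombining two-period binomial model, let q = P(ω₂)/P(ω₃) and let A be the 3×3 matrix with rows (ΔS₁(ω₁), ΔS₂(ω₁), 0), (ΔS₁(ω₄), 0, ΔS₂(ω₄)), and (q·ΔS₁(ω₂)+ΔS₁(ω₃), q·ΔS₂(ω₂), ΔS₂(ω₃)). Then there is no statistical arbitrage if and only if det(A) = 0. -/
/-- In the recombining two-period binomial model, with `q = P(ω₂)/P(ω₃)` and `A` the 3×3
matrix encoding the statistical-arbitrage inequalities, there is no statistical arbitrage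
iff `det A = 0`. -/
theorem statistical_arbitrage_stmt3
    (s0 sp sm spp spm smm p2 p3 : ℝ)
    (h1 : s0 < sp) (h2 : sm < s0) (h3 : sp < spp) (h4 : sm < spm) (h5 : spm < sp)
    (h6 : smm < sm) (h0 : 0 < s0) (hp2 : 0 < p2) (hp3 : 0 < p3) :
    let q : ℝ := p2 / p3
    let A : Matrix (Fin 3) (Fin 3) ℝ :=
      !![sp - s0, spp - sp, 0;
         sm - s0, 0, smm - sm;
         q * (sp - s0) + (sm - s0), q * (spm - sp), spm - sm]
    ((¬ ∃ φ : Fin 3 → ℝ, (∀ i, 0 ≤ A.mulVec φ i) ∧ A.mulVec φ ≠ 0) ↔ A.det = 0) := by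
  intro q A
  have hq : 0 < q := div_pos hp2 hp3
  have hdet : A.det = (sp - s0) * (0 * (spm - sm) - (smm - sm) * (q * (spm - sp)))
      - (spp - sp) * ((sm - s0) * (spm - sm) - (smm - sm) * (q * (sp - s0) + (sm - s0)))
      + 0 * ((sm - s0) * (q * (spm - sp)) - 0 * (q * (sp - s0) + (sm - s0))) := by
    simp [A, Matrix.det_fin_three]
    ring
  constructor
  · intro hno
    by_contra hd
    have hu : IsUnit A.det := isUnit_iff_ne_zero.mpr hd
    refine hno ⟨A⁻¹.mulVec ![1,1,1], ?_, ?_⟩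
    · intro i
      rw [Matrix.mulVec_mulVec, Matrix.mul_nonsing_inv A hu, Matrix.one_mulVec]
      fin_cases i <;> norm_num
    · rw [Matrix.mulVec_mulVec, Matrix.mul_nonsing_inv A hu, Matrix.one_mulVec]
      intro h
      have := congrFun h 0
      norm_num at this
  · rintro hd ⟨φ, hpos, hne⟩
    have e0 : 0 ≤ (sp - s0) * φ 0 + (spp - sp) * φ 1 := by
      simpa [A, Matrix.mulVec, dotProduct, Fin.sum_univ_three] using hpos 0
    have e1 : 0 ≤ (sm - s0) * φ 0 + (smm - sm) * φ 2 := by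
      simpa [A, Matrix.mulVec, dotProduct, Fin.sum_univ_three] using hpos 1
    have e2 : 0 ≤ (q * (sp - s0) + (sm - s0)) * φ 0 + q * (spm - sp) * φ 1 + (spm - sm) * φ 2 := by
      simpa [A, Matrix.mulVec, dotProduct, Fin.sum_univ_three, add_assoc] using hpos 2
    rw [hdet] at hd
    have mu0 : 0 < q * (spm - sp) * (smm - sm) := by
      have : q * (spm - sp) * (smm - sm) = q * ((sp - spm) * (sm - smm)) := by ring
      rw [this]
      exact mul_pos hq (mul_pos (by linarith) (by linarith))
    have mu1 : 0 < (spp - sp) * (spm - sm) := mul_pos (by linarith) (by linarith)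
    have mu2 : 0 < -((spp - sp) * (smm - sm)) := by
      have : -((spp - sp) * (smm - sm)) = (spp - sp) * (sm - smm) := by ring
      rw [this]
      exact mul_pos (by linarith) (by linarith)
    have key : q * (spm - sp) * (smm - sm) * ((sp - s0) * φ 0 + (spp - sp) * φ 1)
        + (spp - sp) * (spm - sm) * ((sm - s0) * φ 0 + (smm - sm) * φ 2)
        + (-((spp - sp) * (smm - sm)))
          * ((q * (sp - s0) + (sm - s0)) * φ 0 + q * (spm - sp) * φ 1 + (spm - sm) * φ 2)
        = 0 := by
      linear_combination (-(φ 0)) * hd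
    have t0 := mul_nonneg mu0.le e0
    have t1 := mul_nonneg mu1.le e1
    have t2 := mul_nonneg mu2.le e2
    have z0 : (sp - s0) * φ 0 + (spp - sp) * φ 1 = 0 := by
      have h' : q * (spm - sp) * (smm - sm) * ((sp - s0) * φ 0 + (spp - sp) * φ 1) = 0 := by
        linarith
      exact (mul_eq_zero.mp h').resolve_left (ne_of_gt mu0)
    have z1 : (sm - s0) * φ 0 + (smm - sm) * φ 2 = 0 := by
      have h' : (spp - sp) * (spm - sm) * ((sm - s0) * φ 0 + (smm - sm) * φ 2) = 0 := by
        linarith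
      exact (mul_eq_zero.mp h').resolve_left (ne_of_gt mu1)
    have z2 : (q * (sp - s0) + (sm - s0)) * φ 0 + q * (spm - sp) * φ 1 + (spm - sm) * φ 2 = 0 := by
      have h' : (-((spp - sp) * (smm - sm)))
          * ((q * (sp - s0) + (sm - s0)) * φ 0 + q * (spm - sp) * φ 1 + (spm - sm) * φ 2) = 0 := by
        linarith
      exact (mul_eq_zero.mp h').resolve_left (ne_of_gt mu2)
    apply hne
    funext i
    fin_cases i <;>
      simp [A, Matrix.mulVec, dotProduct, Fin.sum_univ_three] <;>
      linarith [z0, z1, z2]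
end

section
/- Let A be a real 3×3 matrix of the form A = [[a, b, 0], [c, 0, d], [e, f, g]] with a > 0, b > 0, c < 0, d < 0, f < 0, g > 0 (these sign constraints correspond to the recombining binomial model with ΔS₁(ω₁)>0, ΔS₂(ω₁)>0, ΔS₁(ω₄)<0, ΔS₂(ω₄)<0, qΔS₂(ω₂)<0, ΔS₂(ω₃)>0). If det(A) = 0, then there is no vector φ ∈ ℝ³ with Aφ ≥ 0 componentwise and Aφ ≠ 0; i.e. the image of A intersects the nonnegative orthant of ℝ³ only in {0}. Conversely, if det(A) ≠ 0, such a vector exists (e.g. φ = A⁻¹(1,1,1)ᵀ). -/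
/-- Linear-algebraic core of the NSA characterization: for `A = [[a,b,0],[c,0,d],[e,f,g]]`
with the indicated sign constraints, `det A = 0` iff the image of `A` meets the nonnegative
orthant only in `{0}`; if `det A ≠ 0`, a statistical-arbitrage vector exists. -/
theorem statistical_arbitrage_stmt4
    (a b c d e f g : ℝ)
    (ha : 0 < a) (hb : 0 < b) (hc : c < 0) (hd : d < 0) (hf : f < 0) (hg : 0 < g) :
    let A : Matrix (Fin 3) (Fin 3) ℝ := !![a, b, 0; c, 0, d; e, f, g]
    (A.det = 0 → ¬ ∃ φ : Fin 3 → ℝ, (∀ i, 0 ≤ A.mulVec φ i) ∧ A.mulVec φ ≠ 0) ∧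
    (A.det ≠ 0 → ∃ φ : Fin 3 → ℝ, (∀ i, 0 ≤ A.mulVec φ i) ∧ A.mulVec φ ≠ 0) := by
  intro A
  have hdet : A.det = -a*d*f - b*c*g + b*d*e := by
    simp [A, Matrix.det_fin_three]; try ring
  have hmv : ∀ φ : Fin 3 → ℝ,
      A.mulVec φ = ![a * φ 0 + b * φ 1, c * φ 0 + d * φ 2,
        e * φ 0 + f * φ 1 + g * φ 2] := by
    intro φ
    funext i
    fin_cases i <;>
      simp [A, Matrix.mulVec, dotProduct, Fin.sum_univ_three] <;> ring
  constructor
  · intro h0 ⟨φ, hpos, hne⟩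
    rw [hdet] at h0
    have h1 := hpos 0
    have h2 := hpos 1
    have h3 := hpos 2
    rw [hmv] at h1 h2 h3
    simp only [Matrix.cons_val_zero, Matrix.cons_val_one, Matrix.head_cons,
      Matrix.cons_val_two, Matrix.tail_cons] at h1 h2 h3
    set y0 := a * φ 0 + b * φ 1 with hy0
    set y1 := c * φ 0 + d * φ 2 with hy1
    set y2 := e * φ 0 + f * φ 1 + g * φ 2 with hy2
    have key : (f*d) * y0 + (g*b) * y1 + (-(b*d)) * y2 = 0 := by
      rw [hy0, hy1, hy2]
      linear_combination (-(φ 0)) * h0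
    have c0 : 0 < f*d := mul_pos_of_neg_of_neg hf hd
    have c1 : 0 < g*b := mul_pos hg hb
    have c2 : 0 < -(b*d) := by nlinarith
    have e0 : y0 = 0 := by nlinarith [mul_nonneg c0.le h1, mul_nonneg c1.le h2, mul_nonneg c2.le h3]
    have e1 : y1 = 0 := by nlinarith [mul_nonneg c0.le h1, mul_nonneg c1.le h2, mul_nonneg c2.le h3]
    have e2 : y2 = 0 := by nlinarith [mul_nonneg c0.le h1, mul_nonneg c1.le h2, mul_nonneg c2.le h3]
    apply hne
    rw [hmv]
    funext i
    fin_cases i <;> simp [← hy0, ← hy1, ← hy2, e0, e1, e2]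
  · intro h0
    have hinv : IsUnit A.det := isUnit_iff_ne_zero.mpr h0
    refine ⟨A⁻¹.mulVec (fun _ => 1), ?_, ?_⟩
    · intro i
      rw [Matrix.mulVec_mulVec, Matrix.mul_nonsing_inv A hinv]
      simp
    · rw [Matrix.mulVec_mulVec, Matrix.mul_nonsing_inv A hinv]
      intro h
      have := congrFun h 0
      simp at this
end

section
/- In the recombining two-period binomial model there exists a statistical arbitrage if and only if P(ω₂)/P(ω₃) ≠ q̃, where q̃ = [ΔS₂(ω₁)(ΔS₁(ω₃)ΔS₂(ω₄) − ΔS₁(ω₄)ΔS₂(ω₃))] / [ΔS₂(ω₄)(ΔS₁(ω₁)ΔS₂(ω₂) − ΔS₁(ω₂)ΔS₂(ω₁))]. -/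
/-- In the recombining two-period binomial model there exists a statistical arbitrage iff
`P(ω₂)/P(ω₃) ≠ q̃`, where `q̃` is the explicit critical ratio of price increments. -/
theorem statistical_arbitrage_stmt5
    (s0 sp sm spp spm smm p2 p3 : ℝ)
    (h1 : s0 < sp) (h2 : sm < s0) (h3 : sp < spp) (h4 : sm < spm) (h5 : spm < sp)
    (h6 : smm < sm) (h0 : 0 < s0) (hp2 : 0 < p2) (hp3 : 0 < p3) :
    let q : ℝ := p2 / p3
    let A : Matrix (Fin 3) (Fin 3) ℝ :=
      !![sp - s0, spp - sp, 0;
         sm - s0, 0, smm - sm;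
         q * (sp - s0) + (sm - s0), q * (spm - sp), spm - sm]
    let qtilde : ℝ :=
      ((spp - sp) * ((sm - s0) * (smm - sm) - (sm - s0) * (spm - sm))) /
        ((smm - sm) * ((sp - s0) * (spm - sp) - (sp - s0) * (spp - sp)))
    ((∃ φ : Fin 3 → ℝ, (∀ i, 0 ≤ A.mulVec φ i) ∧ A.mulVec φ ≠ 0) ↔ p2 / p3 ≠ qtilde) := by
  intro q A qtilde
  have ha : 0 < sp - s0 := by linarith
  have hb : 0 < spp - sp := by linarith
  have hc : sm - s0 < 0 := by linarith
  have hd : smm - sm < 0 := by linarith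
  have hb' : spm - sp < 0 := by linarith
  have he : 0 < spm - sm := by linarith
  have hq : 0 < q := div_pos hp2 hp3
  have hD : 0 < (smm - sm) * ((sp - s0) * (spm - sp) - (sp - s0) * (spp - sp)) := by
    apply mul_pos_of_neg_of_neg hd
    nlinarith [mul_lt_mul_of_pos_left (show spm - sp < spp - sp by linarith) ha]
  have e0 : ∀ φ : Fin 3 → ℝ, A.mulVec φ 0 = (sp - s0) * φ 0 + (spp - sp) * φ 1 := by
    intro φ
    simp [A, Matrix.mulVec, dotProduct, Fin.sum_univ_three]
  have e1 : ∀ φ : Fin 3 → ℝ, A.mulVec φ 1 = (sm - s0) * φ 0 + (smm - sm) * φ 2 := by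
    intro φ
    simp [A, Matrix.mulVec, dotProduct, Fin.sum_univ_three]
  have e2 : ∀ φ : Fin 3 → ℝ, A.mulVec φ 2 =
      (q * (sp - s0) + (sm - s0)) * φ 0 + q * (spm - sp) * φ 1 + (spm - sm) * φ 2 := by
    intro φ
    simp [A, Matrix.mulVec, dotProduct, Fin.sum_univ_three]
  have hdet : A.det =
      (spp - sp) * ((sm - s0) * (smm - sm) - (sm - s0) * (spm - sm))
      - q * ((smm - sm) * ((sp - s0) * (spm - sp) - (sp - s0) * (spp - sp))) := by
    simp [A, Matrix.det_fin_three]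
    ring
  have hqdef : q = p2 / p3 := rfl
  have hqt : qtilde = ((spp - sp) * ((sm - s0) * (smm - sm) - (sm - s0) * (spm - sm))) /
      ((smm - sm) * ((sp - s0) * (spm - sp) - (sp - s0) * (spp - sp))) := rfl
  clear_value q A qtilde
  constructor
  · rintro ⟨φ, hpos, hAne⟩
    intro hqe
    have hqD : q * ((smm - sm) * ((sp - s0) * (spm - sp) - (sp - s0) * (spp - sp)))
        = (spp - sp) * ((sm - s0) * (smm - sm) - (sm - s0) * (spm - sm)) := by
      rw [hqdef, hqe, hqt]
      exact div_mul_cancel₀ _ (ne_of_gt hD)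
    set l1 : ℝ := -(q * (spm - sp)) / (spp - sp) with hl1
    set l2 : ℝ := -(spm - sm) / (smm - sm) with hl2
    have hl1pos : 0 < l1 := div_pos (by nlinarith) hb
    have hl2pos : 0 < l2 := by
      rw [hl2, div_pos_iff]
      right
      constructor <;> linarith
    have hL1 : l1 * (spp - sp) = -(q * (spm - sp)) := by
      rw [hl1]; exact div_mul_cancel₀ _ (ne_of_gt hb)
    have hL2 : l2 * (smm - sm) = -(spm - sm) := by
      rw [hl2]; exact div_mul_cancel₀ _ (ne_of_lt hd)
    have hcoef1 : l1 * (spp - sp) + q * (spm - sp) = 0 := by rw [hL1]; ring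
    have hcoef2 : l2 * (smm - sm) + (spm - sm) = 0 := by rw [hL2]; ring
    have key : (l1 * (sp - s0) + l2 * (sm - s0) + (q * (sp - s0) + (sm - s0)))
        * ((spp - sp) * (smm - sm)) = 0 := by
      linear_combination ((sp - s0) * (smm - sm)) * hL1 + ((sm - s0) * (spp - sp)) * hL2 - hqD
    have hcoef0 : l1 * (sp - s0) + l2 * (sm - s0) + (q * (sp - s0) + (sm - s0)) = 0 :=
      (mul_eq_zero.mp key).resolve_right (mul_ne_zero (ne_of_gt hb) (ne_of_lt hd))
    have hsum : l1 * A.mulVec φ 0 + l2 * A.mulVec φ 1 + A.mulVec φ 2 = 0 := by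
      rw [e0, e1, e2]
      linear_combination (φ 0) * hcoef0 + (φ 1) * hcoef1 + (φ 2) * hcoef2
    have h0' := hpos 0
    have h1' := hpos 1
    have h2' := hpos 2
    clear_value l1 l2
    clear hL1 hL2 hcoef0 hcoef1 hcoef2 key hqD hl1 hl2
    have t0 : 0 ≤ l1 * A.mulVec φ 0 := mul_nonneg hl1pos.le h0'
    have t1 : 0 ≤ l2 * A.mulVec φ 1 := mul_nonneg hl2pos.le h1'
    have z2 : A.mulVec φ 2 = 0 := by linarith
    have m0 : l1 * A.mulVec φ 0 = 0 := by linarith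
    have m1 : l2 * A.mulVec φ 1 = 0 := by linarith
    have z0 : A.mulVec φ 0 = 0 := (mul_eq_zero.mp m0).resolve_left hl1pos.ne'
    have z1 : A.mulVec φ 1 = 0 := (mul_eq_zero.mp m1).resolve_left hl2pos.ne'
    apply hAne
    funext i
    fin_cases i
    · exact z0
    · exact z1
    · exact z2
  · intro hne
    have hdetne : A.det ≠ 0 := by
      rw [hdet]
      intro h
      apply hne
      rw [← hqdef, hqt, eq_div_iff (ne_of_gt hD)]
      linarith
    have hunit : IsUnit A.det := isUnit_iff_ne_zero.mpr hdetne
    refine ⟨A⁻¹.mulVec 1, ?_, ?_⟩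
    · intro i
      rw [Matrix.mulVec_mulVec, Matrix.mul_nonsing_inv A hunit, Matrix.one_mulVec]
      norm_num
    · rw [Matrix.mulVec_mulVec, Matrix.mul_nonsing_inv A hunit, Matrix.one_mulVec]
      intro h
      have := congrFun h 0
      simp at this
end

section
/- In the recombining two-period binomial model, no statistical arbitrage holds if and only if the (unique) equivalent martingale measure Q has a path-independent density, i.e. dQ/dP(ω₂) = dQ/dP(ω₃). Concretely, with q̃ as defined, det(A) = 0 is equivalent to Q(ω₂)/Q(ω₃) = q̃ = P(ω₂)/P(ω₃). -/
/-- In the recombining two-period binomial model, NSA (`det A = 0`) holds iff the unique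
equivalent martingale measure has a path-independent density, i.e. `Q(ω₂)/Q(ω₃) = q̃ =
P(ω₂)/P(ω₃)`. -/
theorem statistical_arbitrage_stmt6
    (s0 sp sm spp spm smm p2 p3 : ℝ)
    (h1 : s0 < sp) (h2 : sm < s0) (h3 : sp < spp) (h4 : sm < spm) (h5 : spm < sp)
    (h6 : smm < sm) (h0 : 0 < s0) (hp2 : 0 < p2) (hp3 : 0 < p3) :
    let q : ℝ := p2 / p3
    let A : Matrix (Fin 3) (Fin 3) ℝ :=
      !![sp - s0, spp - sp, 0;
         sm - s0, 0, smm - sm;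
         q * (sp - s0) + (sm - s0), q * (spm - sp), spm - sm]
    let qQ2 : ℝ := -((spp - sp) * ((sm - s0) * (smm - sm) - (sm - s0) * (spm - sm)))
    let qQ3 : ℝ := -((smm - sm) * ((sp - s0) * (spm - sp) - (sp - s0) * (spp - sp)))
    let qtilde : ℝ :=
      ((spp - sp) * ((sm - s0) * (smm - sm) - (sm - s0) * (spm - sm))) /
        ((smm - sm) * ((sp - s0) * (spm - sp) - (sp - s0) * (spp - sp)))
    qQ2 / qQ3 = qtilde ∧ (A.det = 0 ↔ p2 / p3 = qtilde) := by
  intro q A qQ2 qQ3 qtilde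
  have hd : (smm - sm) * ((sp - s0) * (spm - sp) - (sp - s0) * (spp - sp)) ≠ 0 := by
    have : (sp - s0) * (spm - sp) - (sp - s0) * (spp - sp) = (sp - s0) * (spm - spp) := by ring
    rw [this]
    have h1' : (sp - s0) * (spm - spp) < 0 := mul_neg_of_pos_of_neg (by linarith) (by linarith)
    exact mul_ne_zero (by linarith) (by linarith)
  constructor
  · show -((spp - sp) * ((sm - s0) * (smm - sm) - (sm - s0) * (spm - sm))) /
      -((smm - sm) * ((sp - s0) * (spm - sp) - (sp - s0) * (spp - sp))) = qtilde
    rw [neg_div_neg_eq]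
  · show A.det = 0 ↔ p2 / p3 = qtilde
    have hdet : A.det = (sp - s0) * (0 * (spm - sm) - (smm - sm) * (q * (spm - sp)))
        - (spp - sp) * ((sm - s0) * (spm - sm) - (smm - sm) * (q * (sp - s0) + (sm - s0)))
        + 0 * ((sm - s0) * (q * (spm - sp)) - 0 * (q * (sp - s0) + (sm - s0))) := by
      simp [A, Matrix.det_fin_three]; ring
    rw [hdet]
    show _ ↔ p2 / p3 = ((spp - sp) * ((sm - s0) * (smm - sm) - (sm - s0) * (spm - sm))) /
        ((smm - sm) * ((sp - s0) * (spm - sp) - (sp - s0) * (spp - sp)))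
    rw [div_eq_div_iff hp3.ne' hd]
    show (sp - s0) * (0 * (spm - sm) - (smm - sm) * (p2 / p3 * (spm - sp)))
        - (spp - sp) * ((sm - s0) * (spm - sm) - (smm - sm) * (p2 / p3 * (sp - s0) + (sm - s0)))
        + 0 * ((sm - s0) * (p2 / p3 * (spm - sp)) - 0 * (p2 / p3 * (sp - s0) + (sm - s0))) = 0 ↔ _
    have hp3' : p3 ≠ 0 := hp3.ne'
    constructor
    · intro h
      field_simp at h
      nlinarith [h]
    · intro h
      field_simp
      nlinarith [h]
end

section
/- In the recombining two-period binomial model with P(ω₂)/P(ω₃) ≠ q̃ (so det A ≠ 0), the vector φ = A⁻¹(1,1,1)ᵀ is a statistical arbitrage strategy, and it equals (1/D)(ξ¹, ξ², ξ³) where ξ¹ = (qΔS₂(ω₂) − ΔS₂(ω₁))ΔS₂(ω₄) + ΔS₂(ω₁)ΔS₂(ω₃), ξ² = −(ΔS₁(ω₃) + qΔS₁(ω₂) − ΔS₁(ω₁))ΔS₂(ω₄) − (ΔS₁(ω₁) − ΔS₁(ω₄))ΔS₂(ω₃), ξ³ = −q(ΔS₁(ω₄) − ΔS₁(ω₁))ΔS₂(ω₂)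 − (−ΔS₁(ω₄) + ΔS₁(ω₃) + qΔS₁(ω₂))ΔS₂(ω₁), and D = (qΔS₁(ω₁)ΔS₂(ω₂) + (−ΔS₁(ω₃) − qΔS₁(ω₂))ΔS₂(ω₁))ΔS₂(ω₄) + ΔS₁(ω₄)ΔS₂(ω₁)ΔS₂(ω₃), with q = P(ω₂)/P(ω₃). -/
/-! Write `a, b, c, d, e, f` for the price increments `ΔS₁(ω₁), ΔS₂(ω₁), ΔS₁(ω₄), ΔS₂(ω₄),
ΔS₂(ω₂), ΔS₂(ω₃)`, so that `A = !![a, b, 0; c, 0, d; q a + c, q e, f]`. Then `ξ = -adj A *ᵥ 1`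
and `D = -det A`, hence `A *ᵥ ξ = D • 1` and `φ = D⁻¹ • ξ = A⁻¹ *ᵥ 1`. Expanding,
`D = a d (e - b) (q - q̃)`; the ordering of the prices makes `a`, `d` and `e - b` nonzero, so
`q ≠ q̃` is exactly what makes `D` nonzero. -/

namespace RecombiningBinomial

open Matrix

variable (q a b c d e f : ℝ)

def incrementMatrix : Matrix (Fin 3) (Fin 3) ℝ :=
  !![a, b, 0; c, 0, d; q * a + c, q * e, f]

def strategyNumerator : Fin 3 → ℝ :=
  ![(q * e - b) * d + b * f,
    -(c + q * a - a) * d - (a - c) * f,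
    -(q * (c - a)) * e - q * a * b]

def strategyDenominator : ℝ :=
  (q * a * e + (-c - q * a) * b) * d + c * b * f

theorem incrementMatrix_mulVec_strategyNumerator :
    incrementMatrix q a b c d e f *ᵥ strategyNumerator q a b c d e f =
      fun _ => strategyDenominator q a b c d e f := by
  ext i
  fin_cases i <;>
    simp only [incrementMatrix, strategyNumerator, strategyDenominator, mulVec, dotProduct,
      Fin.sum_univ_three, of_apply, cons_val', cons_val_zero, cons_val_one, cons_val_two,
      cons_val_fin_one, empty_val', tail_cons, Fin.zero_eta, Fin.mk_one,
      Fin.reduceFinMk, vecHead] <;> ring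

theorem det_incrementMatrix :
    (incrementMatrix q a b c d e f).det = -strategyDenominator q a b c d e f := by
  simp only [incrementMatrix, strategyDenominator, det_fin_three, of_apply, cons_val',
    cons_val_zero, cons_val_one, cons_val_two, cons_val_fin_one, empty_val', head_cons,
    tail_cons, head_fin_const]
  ring

variable {q a b c d e f}

theorem strategyDenominator_ne_zero (ha : a ≠ 0) (hd : d ≠ 0) (heb : e ≠ b)
    (hq : q ≠ (b * (c * d - c * f)) / (d * (a * e - a * b))) :
    strategyDenominator q a b c d e f ≠ 0 := by
  intro hD
  have hden : d * (a * e - a * b) ≠ 0 := by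
    rw [← mul_sub]
    exact mul_ne_zero hd (mul_ne_zero ha (sub_ne_zero.2 heb))
  apply hq
  rw [eq_div_iff hden]
  unfold strategyDenominator at hD
  linear_combination hD

theorem incrementMatrix_mulVec_inv_smul_strategyNumerator
    (hD : strategyDenominator q a b c d e f ≠ 0) :
    incrementMatrix q a b c d e f *ᵥ
        ((strategyDenominator q a b c d e f)⁻¹ • strategyNumerator q a b c d e f) =
      fun _ => 1 := by
  rw [Matrix.mulVec_smul, incrementMatrix_mulVec_strategyNumerator]
  ext
  simp [hD]

end RecombiningBinomial

theorem statistical_arbitrage_stmt7_general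
    (s0 sp sm spp spm smm p2 p3 : ℝ)
    (h1 : s0 < sp) (h3 : sp < spp) (h5 : spm < sp)
    (h6 : smm < sm)
    (hq : p2 / p3 ≠
      ((spp - sp) * ((sm - s0) * (smm - sm) - (sm - s0) * (spm - sm))) /
        ((smm - sm) * ((sp - s0) * (spm - sp) - (sp - s0) * (spp - sp)))) :
    let q : ℝ := p2 / p3
    let A : Matrix (Fin 3) (Fin 3) ℝ :=
      !![sp - s0, spp - sp, 0;
         sm - s0, 0, smm - sm;
         q * (sp - s0) + (sm - s0), q * (spm - sp), spm - sm]
    let ξ1 : ℝ := (q * (spm - sp) - (spp - sp)) * (smm - sm) + (spp - sp) * (spm - sm)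
    let ξ2 : ℝ := -((sm - s0) + q * (sp - s0) - (sp - s0)) * (smm - sm)
      - ((sp - s0) - (sm - s0)) * (spm - sm)
    let ξ3 : ℝ := -(q * ((sm - s0) - (sp - s0))) * (spm - sp)
      - (-(sm - s0) + (sm - s0) + q * (sp - s0)) * (spp - sp)
    let D : ℝ := (q * (sp - s0) * (spm - sp) + (-(sm - s0) - q * (sp - s0)) * (spp - sp))
      * (smm - sm) + (sm - s0) * (spp - sp) * (spm - sm)
    let φ : Fin 3 → ℝ := ![ξ1 / D, ξ2 / D, ξ3 / D]
    A.det ≠ 0 ∧ D ≠ 0 ∧ A.mulVec φ = (fun _ => 1) ∧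
      (∀ i, 0 ≤ A.mulVec φ i) ∧ A.mulVec φ ≠ 0 := by
  intro q A ξ1 ξ2 ξ3 D φ
  have hD : D ≠ 0 :=
    RecombiningBinomial.strategyDenominator_ne_zero (by linarith) (by linarith) (by linarith) hq
  have hφ : φ = D⁻¹ • RecombiningBinomial.strategyNumerator q (sp - s0) (spp - sp) (sm - s0)
      (smm - sm) (spm - sp) (spm - sm) := by
    ext i
    fin_cases i <;> simp [φ, ξ1, ξ2, ξ3, RecombiningBinomial.strategyNumerator,
      div_eq_inv_mul]
  have hAφ : A.mulVec φ = fun _ => 1 := hφ ▸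
    RecombiningBinomial.incrementMatrix_mulVec_inv_smul_strategyNumerator hD
  refine ⟨?_, hD, hAφ, fun i => by simp [hAφ], ?_⟩
  · rw [show A.det = -D from RecombiningBinomial.det_incrementMatrix ..]
    exact neg_ne_zero.2 hD
  · rw [hAφ]
    exact one_ne_zero

/-- Explicit statistical arbitrage strategy in the recombining two-period binomial model:
when `P(ω₂)/P(ω₃) ≠ q̃`, the vector `φ = (1/D)(ξ¹,ξ²,ξ³)` satisfies `Aφ = (1,1,1)ᵀ` and is
therefore a statistical arbitrage. -/
theorem statistical_arbitrage_stmt7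
    (s0 sp sm spp spm smm p2 p3 : ℝ)
    (h1 : s0 < sp) (h2 : sm < s0) (h3 : sp < spp) (h4 : sm < spm) (h5 : spm < sp)
    (h6 : smm < sm) (h0 : 0 < s0) (hp2 : 0 < p2) (hp3 : 0 < p3)
    (hq : p2 / p3 ≠
      ((spp - sp) * ((sm - s0) * (smm - sm) - (sm - s0) * (spm - sm))) /
        ((smm - sm) * ((sp - s0) * (spm - sp) - (sp - s0) * (spp - sp)))) :
    let q : ℝ := p2 / p3
    let A : Matrix (Fin 3) (Fin 3) ℝ :=
      !![sp - s0, spp - sp, 0;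
         sm - s0, 0, smm - sm;
         q * (sp - s0) + (sm - s0), q * (spm - sp), spm - sm]
    let ξ1 : ℝ := (q * (spm - sp) - (spp - sp)) * (smm - sm) + (spp - sp) * (spm - sm)
    let ξ2 : ℝ := -((sm - s0) + q * (sp - s0) - (sp - s0)) * (smm - sm)
      - ((sp - s0) - (sm - s0)) * (spm - sm)
    let ξ3 : ℝ := -(q * ((sm - s0) - (sp - s0))) * (spm - sp)
      - (-(sm - s0) + (sm - s0) + q * (sp - s0)) * (spp - sp)
    let D : ℝ := (q * (sp - s0) * (spm - sp) + (-(sm - s0) - q * (sp - s0)) * (spp - sp))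
      * (smm - sm) + (sm - s0) * (spp - sp) * (spm - sm)
    let φ : Fin 3 → ℝ := ![ξ1 / D, ξ2 / D, ξ3 / D]
    A.det ≠ 0 ∧ D ≠ 0 ∧ A.mulVec φ = (fun _ => 1) ∧
      (∀ i, 0 ≤ A.mulVec φ i) ∧ A.mulVec φ ≠ 0 :=
  statistical_arbitrage_stmt7_general s0 sp sm spp spm smm p2 p3 h1 h3 h5 h6 hq
end

section
/- Let S follow a one-dimensional diffusion dS_t = a_t dt + b_t dB_t on [0,T] with b > 0 and the Novikov condition satisfied, so the model is complete with unique ELMM Q with density Z_T = exp(−∫₀ᵀ (a_t/b_t) dB_t − (1/2)∫₀ᵀ (a_t/b_t)² dt). If a_t/b_t = c for a constant c, dt⊗dP-a.e., then Z_T = exp(−c B_T − c²T/2) is σ(S_T)-measurable (path-independent), and hence the model admits no statistical arbitrage with respect to G = σ(S_T). In particular, the Black–Scholes model (constant a, b with a_t = μS_t, b_t = σS_t in geometric form, i.e. constant μ/σ) admits no statistical arbitrage. -/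
open MeasureTheory ProbabilityTheory

/-- If the market-price-of-risk is constant (`a_t/b_t ≡ c`, as in Black–Scholes), the
density `Z_T = exp(−c B_T − c²T/2)` of the unique ELMM is `σ(S_T)`-measurable
(path-independent), and hence there is no statistical arbitrage with respect to
`G = σ(S_T)`: no claim with nonpositive `Q`-price, nonnegative conditional `P`-gain and
positive `P`-gain exists. -/
theorem statistical_arbitrage_stmt12
    {Ω : Type*} {F : MeasurableSpace Ω} (P : Measure Ω) [IsProbabilityMeasure P]
    (B : Ω → ℝ) (hB : Measurable B)
    (μ σ T s0 : ℝ) (hσ : 0 < σ) (hT : 0 < T) (hs0 : 0 < s0)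
    (S : Ω → ℝ) (hS : S = fun ω => s0 * Real.exp ((μ - σ ^ 2 / 2) * T + σ * B ω))
    (c : ℝ) (hc : c = μ / σ)
    (Z : Ω → ℝ) (hZ : Z = fun ω => Real.exp (-c * B ω - c ^ 2 * T / 2))
    (Q : Measure Ω) [IsProbabilityMeasure Q]
    (hQ : Q = P.withDensity (fun ω => ENNReal.ofReal (Z ω)))
    (m : MeasurableSpace Ω) (hmdef : m = MeasurableSpace.comap S Real.measurableSpace)
    (hm : m ≤ F) (hZint : Integrable Z P) :
    Measurable[m] Z ∧
    ¬ ∃ X : Ω → ℝ, Integrable X P ∧ Integrable X Q ∧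
      (∫ ω, X ω ∂Q) ≤ 0 ∧ (0 ≤ᵐ[P] P[X|m]) ∧ 0 < ∫ ω, X ω ∂P := by
  have hZpos : ∀ ω, 0 < Z ω := fun ω => by rw [hZ]; exact Real.exp_pos _
  -- Z is a measurable function of S
  have hSm : Measurable[m] S := by
    rw [hmdef]; exact fun s hs => ⟨s, hs, rfl⟩
  have hZS : Z = (fun x : ℝ =>
      Real.exp (-c * ((Real.log (x / s0) - (μ - σ ^ 2 / 2) * T) / σ) - c ^ 2 * T / 2)) ∘ S := by
    funext ω
    have hBω : (Real.log (S ω / s0) - (μ - σ ^ 2 / 2) * T) / σ = B ω := by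
      have h1 : S ω / s0 = Real.exp ((μ - σ ^ 2 / 2) * T + σ * B ω) := by
        rw [hS]; field_simp
      rw [h1, Real.log_exp, add_sub_cancel_left, mul_div_cancel_left₀ _ hσ.ne']
    simp [hZ, Function.comp, hBω]
  have hg : Measurable (fun x : ℝ =>
      Real.exp (-c * ((Real.log (x / s0) - (μ - σ ^ 2 / 2) * T) / σ) - c ^ 2 * T / 2)) := by
    measurability
  have hZm : Measurable[m] Z := by rw [hZS]; exact hg.comp hSm
  refine ⟨hZm, ?_⟩
  rintro ⟨X, hXP, hXQ, hXQ0, hcond, hXPpos⟩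
  -- rewrite Q-integral as P-integral of X * Z
  have hZofReal : (fun ω => ENNReal.ofReal (Z ω)) = fun ω => (((Z ω).toNNReal : NNReal) : ENNReal) := by
    funext ω; rfl
  have hZnn : Measurable[F] fun ω => (Z ω).toNNReal := ((hZm.mono hm le_rfl)).real_toNNReal
  have hXZint : Integrable (fun ω => X ω * Z ω) P := by
    have := (integrable_withDensity_iff (μ := P)
      (f := fun ω => ENNReal.ofReal (Z ω))
      ((hZm.mono hm le_rfl).ennreal_ofReal)
      (Filter.Eventually.of_forall fun ω => ENNReal.ofReal_lt_top) (g := X)).mp (hQ ▸ hXQ)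
    refine this.congr (Filter.Eventually.of_forall fun ω => ?_)
    simp [ENNReal.toReal_ofReal (hZpos ω).le]
  have hQint : (∫ ω, X ω ∂Q) = ∫ ω, Z ω * X ω ∂P := by
    rw [hQ, hZofReal, @integral_withDensity_eq_integral_smul Ω ℝ F P _ _ _ hZnn X]
    congr 1; funext ω
    simp [NNReal.smul_def, Real.coe_toNNReal _ (hZpos ω).le]
  have hZXint : Integrable (Z * X) P := by
    refine hXZint.congr (Filter.Eventually.of_forall fun ω => ?_)
    simp [mul_comm]
  -- pull-out property
  have hpull : P[Z * X|m] =ᵐ[P] Z * P[X|m] :=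
    condExp_mul_of_stronglyMeasurable_left hZm.stronglyMeasurable hZXint hXP
  have hint1 : (∫ ω, Z ω * X ω ∂P) = ∫ ω, (P[Z * X|m]) ω ∂P := (integral_condExp hm).symm
  have hint2 : (∫ ω, (P[Z * X|m]) ω ∂P) = ∫ ω, Z ω * (P[X|m]) ω ∂P :=
    integral_congr_ae hpull
  have hle : (∫ ω, Z ω * (P[X|m]) ω ∂P) ≤ 0 := by
    rw [← hint2, ← hint1, ← hQint]; exact hXQ0
  have hnn : 0 ≤ᵐ[P] fun ω => Z ω * (P[X|m]) ω := by
    filter_upwards [hcond] with ω hω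
    exact mul_nonneg (hZpos ω).le hω
  have hintZE : Integrable (fun ω => Z ω * (P[X|m]) ω) P :=
    (integrable_condExp (f := Z * X)).congr hpull
  have hzero : (fun ω => Z ω * (P[X|m]) ω) =ᵐ[P] 0 := by
    have : (∫ ω, Z ω * (P[X|m]) ω ∂P) = 0 :=
      le_antisymm hle (integral_nonneg_of_ae hnn)
    exact (integral_eq_zero_iff_of_nonneg_ae hnn hintZE).mp this
  have hEzero : P[X|m] =ᵐ[P] 0 := by
    filter_upwards [hzero] with ω hω
    have := mul_eq_zero.mp hω
    rcases this with h | h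
    · exact absurd h (hZpos ω).ne'
    · exact h
  have : (∫ ω, X ω ∂P) = 0 := by
    rw [← integral_condExp hm (f := X)]
    simpa using integral_congr_ae hEzero
  exact absurd this (ne_of_gt hXPpos)
end

section
/- (Follow-the-trend statistical arbitrage.) In the three-period follow-the-trend binomial model, suppose P(ω₂)/P(ω₃) ≠ q̃ (so the first-two-period recombining submodel admits a statistical arbitrage φ = A⁻¹𝟙₃ with A invertible). Then for any α ≥ 0, the strategy ψ = (ψ₁, ψ₂⁺, ψ₂⁻, ψ₃⁺⁺) with ψ₃⁺⁺ = (1−α)/(ΔS₃(ω₁) − ΔS₃(ω₅)) and (ψ₁, ψ₂⁺, ψ₂⁻)ᵀ = φ − ΔS₃(ω₁)ψ₃⁺⁺·γ is a statistical G̃-arbitrage, where γ = A⁻¹(1,0,0)ᵀ = (1/D)(qΔS₂(ω₂)ΔS₂(ω₄), ΔS₁(ω₄)ΔS₂(ω₃) − (qΔS₁(ω₂)+ΔS₁(ω₃))ΔS₂(ω₄), −qΔS₂(ω₂)ΔS₁(ω₄))ᵀ. -/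
/-- Follow-the-trend statistical arbitrage: in the three-period model, if the two-period
recombining submodel admits a statistical arbitrage (`P(ω₂)/P(ω₃) ≠ q̃`), then for every
`α ≥ 0` the extended strategy `ψ` built from `φ = A⁻¹𝟙` and `γ = A⁻¹e₁` is a statistical
`G̃`-arbitrage. -/
theorem statistical_arbitrage_stmt16
    (s0 sp sm spp spm smm sppp sppm p2 p3 α : ℝ)
    (h1 : s0 < sp) (h2 : sm < s0) (h3 : sp < spp) (h4 : sm < spm) (h5 : spm < sp)
    (h6 : smm < sm) (h7 : spp < sppp) (h8 : sppm < spp) (h0 : 0 < s0)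
    (hp2 : 0 < p2) (hp3 : 0 < p3) (hα : 0 ≤ α)
    (hq : p2 / p3 ≠
      ((spp - sp) * ((sm - s0) * (smm - sm) - (sm - s0) * (spm - sm))) /
        ((smm - sm) * ((sp - s0) * (spm - sp) - (sp - s0) * (spp - sp)))) :
    let q : ℝ := p2 / p3
    let A : Matrix (Fin 3) (Fin 3) ℝ :=
      !![sp - s0, spp - sp, 0;
         sm - s0, 0, smm - sm;
         q * (sp - s0) + (sm - s0), q * (spm - sp), spm - sm]
    let φ : Fin 3 → ℝ := A⁻¹.mulVec (fun _ => 1)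
    let γ : Fin 3 → ℝ := A⁻¹.mulVec ![1, 0, 0]
    let ψ3 : ℝ := (1 - α) / ((sppp - spp) - (sppm - spp))
    let ψ : Fin 3 → ℝ := fun i => φ i - (sppp - spp) * ψ3 * γ i
    (0 ≤ ψ 0 * (sp - s0) + ψ 1 * (spp - sp) + ψ3 * (sppp - spp) ∧
     0 ≤ ψ 0 * (sm - s0) + ψ 2 * (smm - sm) ∧
     0 ≤ p2 * (ψ 0 * (sp - s0) + ψ 1 * (spm - sp)) +
         p3 * (ψ 0 * (sm - s0) + ψ 2 * (spm - sm)) ∧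
     0 ≤ ψ 0 * (sp - s0) + ψ 1 * (spp - sp) + ψ3 * (sppm - spp)) ∧
    (0 < ψ 0 * (sp - s0) + ψ 1 * (spp - sp) + ψ3 * (sppp - spp) ∨
     0 < ψ 0 * (sm - s0) + ψ 2 * (smm - sm) ∨
     0 < p2 * (ψ 0 * (sp - s0) + ψ 1 * (spm - sp)) +
         p3 * (ψ 0 * (sm - s0) + ψ 2 * (spm - sm)) ∨
     0 < ψ 0 * (sp - s0) + ψ 1 * (spp - sp) + ψ3 * (sppm - spp)) := by
  intro q A φ γ ψ3 ψ
  have hqdef : q = p2 / p3 := rfl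
  have hp3' : p3 ≠ 0 := ne_of_gt hp3
  have hdet : IsUnit A.det := by
    rw [isUnit_iff_ne_zero]
    have : A.det = q * ((sp - s0) * (smm - sm) * ((spp - sp) - (spm - sp)))
        + (spp - sp) * (sm - s0) * ((smm - sm) - (spm - sm)) := by
      show Matrix.det !![_,_,_;_,_,_;_,_,_] = _
      rw [Matrix.det_fin_three]
      simp [Matrix.cons_val_zero, Matrix.cons_val_one, Matrix.head_cons]
      ring
    rw [this]
    intro h
    apply hq
    have hDd : ((smm - sm) * ((sp - s0) * (spm - sp) - (sp - s0) * (spp - sp))) ≠ 0 := by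
      have hpos : (0:ℝ) < (sm - smm) * ((sp - s0) * (spp - spm)) :=
        mul_pos (by linarith) (mul_pos (by linarith) (by linarith))
      have heq : (smm - sm) * ((sp - s0) * (spm - sp) - (sp - s0) * (spp - sp))
          = (sm - smm) * ((sp - s0) * (spp - spm)) := by ring
      rw [heq]; exact ne_of_gt hpos
    rw [eq_div_iff hDd, ← hqdef]
    linear_combination -h
  have hφv : A.mulVec φ = (fun _ => (1:ℝ)) := by
    show A.mulVec (A⁻¹.mulVec _) = _
    rw [Matrix.mulVec_mulVec, Matrix.mul_nonsing_inv A hdet, Matrix.one_mulVec]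
  have hγv : A.mulVec γ = ![1, 0, 0] := by
    show A.mulVec (A⁻¹.mulVec _) = _
    rw [Matrix.mulVec_mulVec, Matrix.mul_nonsing_inv A hdet, Matrix.one_mulVec]
  have e1 := congrFun hφv 0
  have e2 := congrFun hφv 1
  have e3 := congrFun hφv 2
  have g1 := congrFun hγv 0
  have g2 := congrFun hγv 1
  have g3 := congrFun hγv 2
  simp [show A = !![sp - s0, spp - sp, 0; sm - s0, 0, smm - sm;
      q * (sp - s0) + (sm - s0), q * (spm - sp), spm - sm] from rfl,
    Matrix.mulVec, dotProduct, Fin.sum_univ_three]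
    at e1 e2 e3 g1 g2 g3
  have hqp : q * p3 = p2 := by rw [hqdef]; field_simp
  have e3' : p2 * ((sp - s0) * φ 0 + (spm - sp) * φ 1)
      + p3 * ((sm - s0) * φ 0 + (spm - sm) * φ 2) = p3 := by
    linear_combination p3 * e3 - ((sp - s0) * φ 0 + (spm - sp) * φ 1) * hqp
  have g3' : p2 * ((sp - s0) * γ 0 + (spm - sp) * γ 1)
      + p3 * ((sm - s0) * γ 0 + (spm - sm) * γ 2) = 0 := by
    linear_combination p3 * g3 - ((sp - s0) * γ 0 + (spm - sp) * γ 1) * hqp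
  have hψ0 : ψ 0 = φ 0 - (sppp - spp) * ψ3 * γ 0 := rfl
  have hψ1 : ψ 1 = φ 1 - (sppp - spp) * ψ3 * γ 1 := rfl
  have hψ2 : ψ 2 = φ 2 - (sppp - spp) * ψ3 * γ 2 := rfl
  have hden : (sppp - spp) - (sppm - spp) ≠ 0 := by intro h; apply absurd h; push_neg; nlinarith
  have hψ3e : ψ3 * ((sppp - spp) - (sppm - spp)) = 1 - α := by
    show (1 - α) / ((sppp - spp) - (sppm - spp)) * _ = _
    exact div_mul_cancel₀ _ hden
  have t1 : ψ 0 * (sp - s0) + ψ 1 * (spp - sp) + ψ3 * (sppp - spp) = 1 := by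
    rw [hψ0, hψ1]; linear_combination e1 - (sppp - spp) * ψ3 * g1
  have t2 : ψ 0 * (sm - s0) + ψ 2 * (smm - sm) = 1 := by
    rw [hψ0, hψ2]; linear_combination e2 - (sppp - spp) * ψ3 * g2
  have t3 : p2 * (ψ 0 * (sp - s0) + ψ 1 * (spm - sp)) +
      p3 * (ψ 0 * (sm - s0) + ψ 2 * (spm - sm)) = p3 := by
    rw [hψ0, hψ1, hψ2]; linear_combination e3' - (sppp - spp) * ψ3 * g3'
  have t4 : ψ 0 * (sp - s0) + ψ 1 * (spp - sp) + ψ3 * (sppm - spp) = α := by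
    rw [hψ0, hψ1]; linear_combination e1 - (sppp - spp) * ψ3 * g1 - hψ3e
  exact ⟨⟨by linarith, by linarith, by linarith, by linarith⟩, Or.inl (by linarith)⟩
end

section
/- (Invariance of the statistical-arbitrage criterion under density path-independence, abstract version.) Let (Ω,F,P) be a probability space, G ⊆ F a sub-σ-algebra, and Z > 0 a.s. with E_P[Z] = 1 defining Q by dQ = Z dP. Suppose X ∈ L¹(P) ∩ L¹(Q) satisfies E_P[X|G] ≥ 0 P-a.s. and E_P[X] > 0. If Z is G-measurable and V is a Q-supermartingale value process with V₀ = 0 and V_T = X, then a contradiction arises: E_Q[X|G] = E_P[X|G] ≥ 0 and E_Q[X] ≤ 0 force E_P[X|G] = 0 a.s., contradicting E_P[X] > 0. Formally: if Z = dQ/dP is G-measurable, there is no X ∈ L¹(P)∩L¹(Q) with E_Q[X] ≤ 0, E_P[X|G] ≥ 0 a.s., and E_P[X] > 0. -/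
open MeasureTheory ProbabilityTheory
open scoped NNReal ENNReal

/-- Abstract invariance: if the density `Z = dQ/dP` is `G`-measurable, then there is no
`X ∈ L¹(P) ∩ L¹(Q)` with `E_Q[X] ≤ 0`, `E_P[X|G] ≥ 0` a.s., and `E_P[X] > 0`. -/
theorem statistical_arbitrage_stmt19
    {Ω : Type*} (m : MeasurableSpace Ω) {F : MeasurableSpace Ω} (hm : m ≤ F)
    (P : Measure Ω) [IsProbabilityMeasure P]
    (Z : Ω → ℝ) (hZpos : ∀ᵐ ω ∂P, 0 < Z ω) (hZint : Integrable Z P)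
    (hZmean : (∫ ω, Z ω ∂P) = 1)
    (hZmeas : Measurable[m] Z)
    (Q : Measure Ω)
    (hQ : Q = P.withDensity (fun ω => ENNReal.ofReal (Z ω))) :
    ¬ ∃ X : Ω → ℝ, Integrable X P ∧ Integrable X Q ∧
      (∫ ω, X ω ∂Q) ≤ 0 ∧ (0 ≤ᵐ[P] P[X|m]) ∧ 0 < ∫ ω, X ω ∂P := by
  rintro ⟨X, hXP, hXQ, hEQ, hcond, hEP⟩
  have hfmeas : Measurable fun ω => Real.toNNReal (Z ω) := hZmeas.real_toNNReal.mono hm le_rfl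
  have hQ' : Q = P.withDensity (fun ω => ((Real.toNNReal (Z ω) : ℝ≥0) : ℝ≥0∞)) := by
    simpa [ENNReal.ofReal] using hQ
  have hsmul_ae : (fun ω => (Real.toNNReal (Z ω) : ℝ) • X ω) =ᵐ[P] fun ω => Z ω * X ω := by
    filter_upwards [hZpos] with ω hω
    simp [Real.coe_toNNReal _ hω.le, smul_eq_mul]
  have hintQ : (∫ ω, X ω ∂Q) = ∫ ω, Z ω * X ω ∂P := by
    rw [hQ', integral_withDensity_eq_integral_smul hfmeas X]
    exact integral_congr_ae hsmul_ae
  have hZX : Integrable (fun ω => Z ω * X ω) P := by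
    have := (integrable_withDensity_iff_integrable_smul hfmeas (g := X)).1
      (by rwa [hQ'] at hXQ)
    exact this.congr hsmul_ae
  have hpull : P[fun ω => Z ω * X ω|m] =ᵐ[P] fun ω => Z ω * (P[X|m]) ω := by
    have := condExp_mul_of_stronglyMeasurable_left (μ := P) (m := m)
      (hZmeas.stronglyMeasurable) (f := Z) (g := X) hZX hXP
    exact this
  have hintZX : (∫ ω, Z ω * X ω ∂P) = ∫ ω, Z ω * (P[X|m]) ω ∂P :=
    calc ∫ ω, Z ω * X ω ∂P
        = ∫ ω, (P[fun ω => Z ω * X ω|m]) ω ∂P :=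
          (integral_condExp (μ := P) (m := m) (f := fun ω => Z ω * X ω) hm).symm
      _ = ∫ ω, Z ω * (P[X|m]) ω ∂P := integral_congr_ae hpull
  have hintZY_le : (∫ ω, Z ω * (P[X|m]) ω ∂P) ≤ 0 := by
    rw [← hintZX, ← hintQ]; exact hEQ
  have hZYint : Integrable (fun ω => Z ω * (P[X|m]) ω) P :=
    (integrable_condExp (f := fun ω => Z ω * X ω)).congr hpull
  have hZYnn : 0 ≤ᵐ[P] fun ω => Z ω * (P[X|m]) ω := by
    filter_upwards [hZpos, hcond] with ω h1 h2
    exact mul_nonneg h1.le h2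
  have hZY0 : (fun ω => Z ω * (P[X|m]) ω) =ᵐ[P] 0 := by
    have : (∫ ω, Z ω * (P[X|m]) ω ∂P) = 0 :=
      le_antisymm hintZY_le (integral_nonneg_of_ae hZYnn)
    exact (integral_eq_zero_iff_of_nonneg_ae hZYnn hZYint).mp this
  have hY0 : (P[X|m]) =ᵐ[P] 0 := by
    filter_upwards [hZpos, hZY0] with ω h1 h2
    rcases mul_eq_zero.mp h2 with h | h
    · exact absurd h h1.ne'
    · exact h
  have hX0 : (∫ ω, X ω ∂P) = 0 :=
    calc ∫ ω, X ω ∂P = ∫ ω, (P[X|m]) ω ∂P := (integral_condExp (μ := P) (m := m) (f := X) hm).symm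
      _ = ∫ ω, (0 : Ω → ℝ) ω ∂P := integral_congr_ae hY0
      _ = 0 := by simp
  exact absurd hX0 hEP.ne'
end
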